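/- arXiv:1710.06145 — 4 statements merged into one kernel-verified Lean document; each statement's English description precedes it below -/
import Mathlib

section
/- In the divided power envelope A_cris^0 (the A_inf-subalgebra of A_inf[1/p] generated by ξ^n/n! for n ≥ 1, where ξ generates ker(θ: A_inf → O_C)), one has μ^p ∈ p·A_cris^0, and consequently the p-adic topology of A_cris^0 agrees with the (p, μ)-adic topology. -/
/-!
Since `θ μ = 0`, `μ = a ξ` for some `a`, so `μ ^ p = a ^ p ξ ^ p = a ^ p · p! · (ξ ^ p / p!)`
is divisible by `p` in the divided power envelope. Expanding `(p, μ) ^ p`, every product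
of generators either contains a factor `p` or is `μ ^ p`.
-/

theorem Ideal.sup_pow_le_sup_pow {R : Type*} [CommRing R] (I J : Ideal R) (n : ℕ) :
    (I ⊔ J) ^ n ≤ I ⊔ J ^ n := by
  induction n with
  | zero => simp
  | succ n ih =>
    calc (I ⊔ J) ^ (n + 1) ≤ (I ⊔ J ^ n) * (I ⊔ J) := by rw [pow_succ]; gcongr
      _ ≤ I ⊔ J ^ (n + 1) := by
        rw [Ideal.sup_mul, Ideal.mul_sup, Ideal.mul_sup, ← pow_succ]
        exact sup_le (sup_le (le_sup_of_le_left mul_le_left) (le_sup_of_le_left mul_le_left))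
          (sup_le (le_sup_of_le_left mul_le_right) le_sup_right)

theorem pow_mem_span_natCast_of_factorial_mul_eq {R : Type*} [CommRing R] {n : ℕ}
    (hn : 0 < n) {x d : R} (h : (n.factorial : R) * d = x ^ n) :
    x ^ n ∈ Ideal.span {(n : R)} := by
  obtain ⟨k, hk⟩ := Nat.dvd_factorial hn le_rfl
  exact Ideal.mem_span_singleton.mpr ⟨k * d, by rw [← h, hk, Nat.cast_mul, mul_assoc]⟩

theorem acris0_mu_pow_p_mem_and_topologies_agree
    {A O B : Type*} [CommRing A] [CommRing O] [CommRing B] [Algebra A B]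
    (p : ℕ) [Fact p.Prime]
    (θ : A →+* O) (ξ μ : A)
    (hker : RingHom.ker θ = Ideal.span {ξ})
    (hμ : θ μ = 0)
    (dp : ℕ → B)
    (hdp : ∀ n : ℕ, (n.factorial : B) * dp n = (algebraMap A B ξ) ^ n) :
    (algebraMap A B μ) ^ p ∈ Ideal.span {(p : B)} ∧
      (Ideal.span {(p : B), algebraMap A B μ}) ^ p ≤ Ideal.span {(p : B)} ∧
      Ideal.span {(p : B)} ≤ Ideal.span {(p : B), algebraMap A B μ} := by
  obtain ⟨a, rfl⟩ : ξ ∣ μ := Ideal.mem_span_singleton.mp (hker ▸ hμ)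
  have hξ : (algebraMap A B ξ) ^ p ∈ Ideal.span {(p : B)} :=
    pow_mem_span_natCast_of_factorial_mul_eq (Fact.out : p.Prime).pos (hdp p)
  have hμp : (algebraMap A B (ξ * a)) ^ p ∈ Ideal.span {(p : B)} := by
    rw [map_mul, mul_pow]
    exact Ideal.mul_mem_right _ _ hξ
  refine ⟨hμp, ?_, Ideal.span_mono (by simp)⟩
  calc Ideal.span {(p : B), algebraMap A B (ξ * a)} ^ p
      = (Ideal.span {(p : B)} ⊔ Ideal.span {algebraMap A B (ξ * a)}) ^ p := by
        rw [Ideal.span_insert]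
    _ ≤ Ideal.span {(p : B)} ⊔ Ideal.span {algebraMap A B (ξ * a)} ^ p :=
        Ideal.sup_pow_le_sup_pow _ _ p
    _ ≤ Ideal.span {(p : B)} := by
        rw [Ideal.span_singleton_pow, sup_le_iff]
        exact ⟨le_rfl, (Ideal.span_singleton_le_iff_mem _).mpr hμp⟩
end

section
/- Let A be a ring, μ ∈ A a nonzerodivisor, and let K be the Koszul complex K_A(δ₁−1,…,δ_d−1) for commuting endomorphisms δᵢ of an A-module N on which the induced action modulo μ is trivial (i.e., (δᵢ−1)(N) ⊆ μN). Then the subcomplex η_μ(K) ⊆ K has j-th term equal to μʲ·Kʲ, i.e., the décalage in degree j consists exactly of the μʲ-multiples. -/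
open Pointwise

/-!
STATEMENT 6. Let `A` be a ring, `μ ∈ A` a nonzerodivisor (on `N`), and let `K` be the
Koszul (cochain) complex `K_N(δ₁−1, …, δ_d−1)` for commuting endomorphisms `δᵢ` of an
`A`-module `N` whose induced action modulo `μ` is trivial, i.e. `(δᵢ−1)(N) ⊆ μN`.
Then the subcomplex `η_μ(K) ⊆ K` has `j`-th term equal to `μʲ·Kʲ`: the décalage in
degree `j` consists exactly of the `μʲ`-multiples.

We construct the Koszul cochain complex explicitly: its `j`-th term is the module of
functions on `j`-element subsets of `Fin d` with values in `N`, with the usual signed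
differential built from the operators `δᵢ − 1`.  The `j`-th term of `η_μ(K)` is
`(μ^j • ⊤) ⊓ d⁻¹(μ^{j+1} • ⊤)`, and the claim is that it equals `μ^j • ⊤`.
-/

/-- Index set for the degree `j` term of the Koszul complex on `d` operators:
`j`-element subsets of `Fin d`. -/
def KosIdx (d j : ℕ) : Type := {s : Finset (Fin d) // s.card = j}

/-- The degree-`j` differential of the Koszul cochain complex attached to a family of
commuting operators `F i : N →ₗ[A] N`. -/
def kosD {A N : Type*} [CommRing A] [AddCommGroup N] [Module A N] {d : ℕ}
    (F : Fin d → N →ₗ[A] N) (j : ℕ) :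
    (KosIdx d j → N) →ₗ[A] (KosIdx d (j + 1) → N) where
  toFun x s :=
    ∑ i ∈ s.1.attach,
      ((-1 : ℤ) ^ ((s.1.filter (fun t => t < i.1)).card)) •
        F i.1 (x ⟨s.1.erase i.1, by
          rw [Finset.card_erase_of_mem i.2, s.2]; rfl⟩)
  map_add' x y := by
    funext s
    erw [Pi.add_apply]
    rw [← Finset.sum_add_distrib]
    refine Finset.sum_congr rfl fun i _ => ?_
    rw [← smul_add, ← map_add]
    rfl
  map_smul' a x := by
    funext s
    rw [RingHom.id_apply, Pi.smul_apply, Finset.smul_sum]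
    refine Finset.sum_congr rfl fun i _ => ?_
    rw [smul_comm a, ← (F i.1).map_smul a]
    rfl

theorem Submodule.mem_smul_top_pi_iff {A ι N : Type*} [CommSemiring A] [AddCommMonoid N]
    [Module A N] (a : A) (x : ι → N) :
    x ∈ a • (⊤ : Submodule A (ι → N)) ↔ ∀ i, x i ∈ a • (⊤ : Submodule A N) := by
  simp only [Submodule.mem_smul_pointwise_iff_exists, Submodule.mem_top, true_and]
  constructor
  · rintro ⟨y, rfl⟩ i
    exact ⟨y i, rfl⟩
  · intro h
    choose y hy using h
    exact ⟨y, funext hy⟩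

theorem Submodule.smul_top_le_comap_mul_smul_top {A M M' : Type*} [CommSemiring A]
    [AddCommMonoid M] [Module A M] [AddCommMonoid M'] [Module A M'] {μ : A}
    (f : M →ₗ[A] M') (hf : ∀ x, f x ∈ μ • (⊤ : Submodule A M')) (a : A) :
    a • (⊤ : Submodule A M) ≤ ((a * μ) • ⊤ : Submodule A M').comap f := by
  rintro _ ⟨y, -, rfl⟩
  rw [Submodule.mem_comap, DistribSMul.toLinearMap_apply, map_smul, mul_smul]
  exact Submodule.smul_mem_pointwise_smul _ _ _ (hf y)

section Koszul

variable {A N : Type*} [CommRing A] [AddCommGroup N] [Module A N] {d : ℕ}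

theorem kosD_apply (F : Fin d → N →ₗ[A] N) (j : ℕ) (x : KosIdx d j → N)
    (s : KosIdx d (j + 1)) :
    kosD F j x s = ∑ i ∈ s.1.attach,
      ((-1 : ℤ) ^ ((s.1.filter (fun t => t < i.1)).card)) •
        F i.1 (x ⟨s.1.erase i.1, by rw [Finset.card_erase_of_mem i.2, s.2]; rfl⟩) :=
  rfl

theorem kosD_mem_smul_top {μ : A} {F : Fin d → N →ₗ[A] N}
    (hF : ∀ i x, F i x ∈ μ • (⊤ : Submodule A N)) (j : ℕ) (x : KosIdx d j → N) :
    kosD F j x ∈ μ • (⊤ : Submodule A (KosIdx d (j + 1) → N)) := by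
  rw [Submodule.mem_smul_top_pi_iff]
  intro s
  rw [kosD_apply]
  exact Submodule.sum_mem _ fun i _ => Submodule.smul_of_tower_mem _ _ (hF _ _)

end Koszul

theorem eta_mu_koszul_term_eq_mu_pow_smul_general
    {A N : Type*} [CommRing A] [AddCommGroup N] [Module A N]
    (μ : A)
    (d : ℕ) (δ : Fin d → N →ₗ[A] N)
    (hδμ : ∀ (i : Fin d) (x : N), ∃ y : N, δ i x - x = μ • y) :
    ∀ j : ℕ,
      ((μ ^ j • (⊤ : Submodule A (KosIdx d j → N))) ⊓
        Submodule.comap (kosD (fun i => δ i - LinearMap.id) j)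
          (μ ^ (j + 1) • (⊤ : Submodule A (KosIdx d (j + 1) → N))))
      = μ ^ j • (⊤ : Submodule A (KosIdx d j → N)) := by
  intro j
  refine le_antisymm inf_le_left (le_inf le_rfl ?_)
  have hF : ∀ i x, (δ i - LinearMap.id : N →ₗ[A] N) x ∈ μ • (⊤ : Submodule A N) := fun i x => by
    obtain ⟨y, hy⟩ := hδμ i x
    exact (Submodule.mem_smul_pointwise_iff_exists _ _ _).2 ⟨y, trivial, hy.symm⟩
  rw [pow_succ]
  exact Submodule.smul_top_le_comap_mul_smul_top _ (kosD_mem_smul_top hF j) _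

theorem eta_mu_koszul_term_eq_mu_pow_smul
    {A N : Type*} [CommRing A] [AddCommGroup N] [Module A N]
    (μ : A) (hμ : ∀ x : N, μ • x = 0 → x = 0)
    (d : ℕ) (δ : Fin d → N →ₗ[A] N)
    (hcomm : ∀ i j : Fin d, (δ i).comp (δ j) = (δ j).comp (δ i))
    (hδμ : ∀ (i : Fin d) (x : N), ∃ y : N, δ i x - x = μ • y) :
    ∀ j : ℕ,
      ((μ ^ j • (⊤ : Submodule A (KosIdx d j → N))) ⊓
        Submodule.comap (kosD (fun i => δ i - LinearMap.id) j)
          (μ ^ (j + 1) • (⊤ : Submodule A (KosIdx d (j + 1) → N))))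
      = μ ^ j • (⊤ : Submodule A (KosIdx d j → N)) :=
  eta_mu_koszul_term_eq_mu_pow_smul_general μ d δ hδμ
end

section
/- Let A be a p-torsion-free ring with a decreasing filtration by ideals Fil_n such that each A/Fil_n is p-torsion free and p-adically complete, and such that the induced filtration of A/pA is separated (⋂_n (Fil_n + pA)/pA = 0). Then if Â denotes the p-adic completion of A and Fil̂_n the p-adic completion of Fil_n, the filtration {Fil̂_n} of Â is separated: Â ↪ lim_n Â/Fil̂_n ≅ lim_n A/Fil_n. -/
/-!
STATEMENT 10. Let `A` be a `p`-torsion-free ring with a decreasing filtration by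
ideals `Fil_n` such that each `A/Fil_n` is `p`-torsion free and `p`-adically complete,
and such that the induced filtration of `A/pA` is separated
(`⋂_n (Fil_n + pA) ⊆ pA`).  Then the filtration of the `p`-adic completion `Â` by the
completed ideals `Fil̂_n` is separated: `Â ↪ lim_n Â/Fil̂_n ≅ lim_n A/Fil_n`.

We formalize this with `A` itself `p`-adically complete (and separated), playing the
role of its own `p`-adic completion `Â`, in which case `Fil̂_n = Fil_n` and
separatedness of the filtration reads `⋂_n Fil_n = 0`, i.e. the natural map
`A → lim_n A/Fil_n` is injective.
-/

theorem complete_filtration_separated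
    {A : Type*} [CommRing A] (p : ℕ) [Fact p.Prime]
    (hAcomplete : IsAdicComplete (Ideal.span {(p : A)}) A)
    (hAtf : ∀ x : A, (p : A) * x = 0 → x = 0)
    (Fil : ℕ → Ideal A)
    (hdec : ∀ m n : ℕ, m ≤ n → Fil n ≤ Fil m)
    (hqtf : ∀ (n : ℕ) (x : A ⧸ Fil n), (p : A ⧸ Fil n) * x = 0 → x = 0)
    (hqcomplete : ∀ n : ℕ,
      IsAdicComplete (Ideal.span {(p : A ⧸ Fil n)}) (A ⧸ Fil n))
    (hsep : (⨅ n : ℕ, (Fil n ⊔ Ideal.span {(p : A)})) ≤ Ideal.span {(p : A)}) :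
    (⨅ n : ℕ, Fil n) = ⊥ := by
  rw [eq_bot_iff]
  intro x hx
  -- key step: the intersection is contained in p times itself
  have key : ∀ z ∈ ⨅ n, Fil n, ∃ y, z = (p : A) * y ∧ y ∈ ⨅ n, Fil n := by
    intro z hz
    have hz' : z ∈ Ideal.span {(p : A)} := by
      apply hsep
      rw [Ideal.mem_iInf] at hz ⊢
      exact fun n => Ideal.mem_sup_left (hz n)
    obtain ⟨y, hy⟩ := Ideal.mem_span_singleton'.mp hz'
    refine ⟨y, hy.symm.trans (mul_comm _ _), ?_⟩
    rw [Ideal.mem_iInf] at hz ⊢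
    intro n
    have h0 : (p : A ⧸ Fil n) * (Ideal.Quotient.mk (Fil n) y) = 0 := by
      rw [← map_natCast (Ideal.Quotient.mk (Fil n)), ← map_mul,
        Ideal.Quotient.eq_zero_iff_mem, mul_comm, hy]
      exact hz n
    exact Ideal.Quotient.eq_zero_iff_mem.mp (hqtf n _ h0)
  have hk : ∀ k : ℕ, ∃ y, x = (p : A) ^ k * y ∧ y ∈ ⨅ n, Fil n := by
    intro k
    induction k with
    | zero => exact ⟨x, by simp, hx⟩
    | succ k ih =>
      obtain ⟨y, hy, hmem⟩ := ih
      obtain ⟨z, hz, hmem'⟩ := key y hmem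
      exact ⟨z, by rw [hy, hz, pow_succ]; ring, hmem'⟩
  have hx0 : x = 0 := by
    refine IsHausdorff.haus (IsAdicComplete.toIsHausdorff
      (I := Ideal.span {(p : A)})) x (fun n => ?_)
    rw [SModEq.zero, smul_eq_mul, Ideal.mul_top, Ideal.span_singleton_pow,
      Ideal.mem_span_singleton]
    obtain ⟨y, hy, _⟩ := hk n
    exact ⟨y, hy⟩
  simp [hx0]
end

section
/- Let M be a monoid map Q → P of integral monoids giving a chart of an exact closed immersion of log schemes, where P = (N × ∏Z) × ∏(∏Z/Z) is as in the smooth-case construction. Then for any two choices λ₀, λ₀' of distinguished index, there is a canonical isomorphism P_{λ₀} ≅ P_{λ₀'} of monoids over Q, compatible with the maps to R/p. -/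
/-!
STATEMENT 18. (Charts `P_{l0}` in the smooth case.)  For two choices `l0, l1` of
distinguished index, there is a canonical isomorphism `P_{l0} ≅ P_{l1}` of monoids
over `Q`, compatible with the maps to `R/p`, where
`P_{l0} = (ℕ × ∏_{0≤i≤r_{l0}, i≠i_{l0}} ℤ) × ∏_{λ≠l0} ((∏_{0≤i≤r_λ} ℤ)/ℤ)`
(with `ℤ` embedded diagonally in each quotient).

Following the context we work purely with the monoids: the map `P_{l0} → R/p` sends
the `ℕ`-component to powers of `p^q` and the `ℤ`-components to powers of the units
`v_{λ,i}` satisfying `∏_i v_{λ,i} = 1` (which makes the quotient by the diagonal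
well defined).  The conclusion exhibits an additive monoid isomorphism
`P_{l0} ≃+ P_{l1}` commuting with these maps to (the multiplicative monoid of) `R/p`.
-/

/-- The diagonal copy of `ℤ` in `Fin n → ℤ`. -/
def diagSub (n : ℕ) : AddSubgroup (Fin n → ℤ) :=
  AddSubgroup.zmultiples (fun _ => (1 : ℤ))

/-- `(∏_{0≤i<n} ℤ)/ℤ`, the quotient by the diagonal. -/
abbrev GqT (n : ℕ) := (Fin n → ℤ) ⧸ diagSub n

/-- The monoid `P_{l0}` of the smooth-case chart construction. -/
abbrev PMon {Λ : Type*} [DecidableEq Λ] (r : Λ → ℕ)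
    (idx : (l : Λ) → Fin (r l + 1)) (l0 : Λ) : Type _ :=
  ℕ × ({i : Fin (r l0 + 1) // i ≠ idx l0} → ℤ) ×
    ((l : {l : Λ // l ≠ l0}) → GqT (r l.1 + 1))

/-- The map `(∏ ℤ)/ℤ → Tˣ`, `w ↦ ∏ᵢ vᵢ^{wᵢ}`, well defined since `∏ᵢ vᵢ = 1`. -/
noncomputable def vProd {T : Type*} [CommMonoid T] (n : ℕ) (v : Fin n → Tˣ)
    (hv : ∏ i, v i = 1) : GqT n →+ Additive Tˣ :=
  QuotientAddGroup.lift (diagSub n)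
    (AddMonoidHom.mk' (fun w => Additive.ofMul (∏ i, v i ^ (w i))) (by
      intro w w'
      simp [Pi.add_apply, zpow_add, Finset.prod_mul_distrib]))
    (by
      intro x hx
      obtain ⟨k, rfl⟩ := AddSubgroup.mem_zmultiples_iff.mp hx
      show Additive.ofMul (∏ i, v i ^ ((k • fun _ => (1 : ℤ)) i)) = 0
      have h1 : (∏ i, v i ^ ((k • fun _ => (1 : ℤ)) i)) = (∏ i, v i) ^ k := by
        rw [← Finset.prod_zpow]
        exact Finset.prod_congr rfl (fun i _ => by simp)
      rw [h1, hv, one_zpow]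
      rfl)

/-- The augmentation map `P_{l0} → R/p` (multiplicatively valued in `T`). -/
noncomputable def psiFun {Λ : Type*} [Fintype Λ] [DecidableEq Λ] (r : Λ → ℕ)
    (idx : (l : Λ) → Fin (r l + 1)) {T : Type*} [CommMonoid T] (pq : T)
    (v : (l : Λ) → Fin (r l + 1) → Tˣ) (hv : ∀ l, ∏ i, v l i = 1) (l0 : Λ)
    (z : PMon r idx l0) : T :=
  pq ^ z.1 *
    (∏ i : {i : Fin (r l0 + 1) // i ≠ idx l0}, ((v l0 i.1 ^ (z.2.1 i) : Tˣ) : T)) *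
    ∏ l : {l : Λ // l ≠ l0},
      ((Additive.toMul (vProd (r l.1 + 1) (v l.1) (hv l.1) (z.2.2 l)) : Tˣ) : T)

/-!
Every `P_{l0}` is identified with the monoid `ℕ × ∏_λ (ℤ^{r_λ+1}/ℤ)`, which does not depend
on `l0`: the factor `∏_{i ≠ i_{l0}} ℤ` is `ℤ^{r_{l0}+1}/ℤ`, a class being normalized by making
its `i_{l0}`-coordinate vanish (the inverse is extension by zero).  Under this identification
the map to `R/p` becomes `(n, w) ↦ (p^q)^n ∏_λ ∏_i v_{λ,i}^{w_{λ,i}}`, again independent of `l0`,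
so one identification followed by the inverse of the other is the required isomorphism.
-/

namespace AddEquiv

def piSplitAt {α : Type*} [DecidableEq α] (i : α) (β : α → Type*) [∀ a, Add (β a)] :
    (∀ a, β a) ≃+ β i × ∀ a : {a // a ≠ i}, β a :=
  { Equiv.piSplitAt i β with map_add' := fun _ _ => rfl }

end AddEquiv

theorem Fintype.prod_piSplitAt_symm {α M : Type*} [Fintype α] [DecidableEq α] [CommMonoid M]
    {β : α → Type*} (i : α) (g : ∀ a, β a → M) (x : β i) (y : ∀ a : {a // a ≠ i}, β a) :
    ∏ a, g a ((Equiv.piSplitAt i β).symm (x, y) a) = g i x * ∏ a : {a // a ≠ i}, g a (y a) := by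
  rw [Fintype.prod_eq_mul_prod_subtype_ne _ i]
  simp only [Equiv.piSplitAt_symm_apply, dite_true]
  congr 1
  exact Finset.prod_congr rfl fun a _ => by rw [dif_neg a.2]

section QuotientDiagonal

variable {ι : Type*} [DecidableEq ι] (j : ι)

def normalizeAt : (ι → ℤ) →+ ({i // i ≠ j} → ℤ) where
  toFun w i := w i - w j
  map_zero' := by ext; simp
  map_add' w w' := by ext; simp only [Pi.add_apply]; ring

theorem ker_normalizeAt :
    (normalizeAt j).ker = AddSubgroup.zmultiples (fun _ : ι => (1 : ℤ)) := by
  ext w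
  simp only [AddMonoidHom.mem_ker, AddSubgroup.mem_zmultiples_iff]
  constructor
  · intro hw
    refine ⟨w j, funext fun i => ?_⟩
    by_cases hi : i = j
    · simp [hi]
    · simpa [normalizeAt, sub_eq_zero, eq_comm] using congrFun hw ⟨i, hi⟩
  · rintro ⟨k, rfl⟩
    ext
    simp [normalizeAt]

theorem normalizeAt_piSplitAt_symm_zero (a : {i // i ≠ j} → ℤ) :
    normalizeAt j ((Equiv.piSplitAt j _).symm (0, a)) = a := by
  ext i
  simp [normalizeAt, Equiv.piSplitAt_symm_apply, i.2]

def quotientDiagonalEquiv :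
    (ι → ℤ) ⧸ AddSubgroup.zmultiples (fun _ : ι => (1 : ℤ)) ≃+ ({i // i ≠ j} → ℤ) :=
  (QuotientAddGroup.quotientAddEquivOfEq (ker_normalizeAt j)).symm.trans
    (QuotientAddGroup.quotientKerEquivOfRightInverse _ _ (normalizeAt_piSplitAt_symm_zero j))

end QuotientDiagonal

theorem vProd_quotientDiagonalEquiv_symm {T : Type*} [CommMonoid T] {n : ℕ} (v : Fin n → Tˣ)
    (hv : ∏ i, v i = 1) (j : Fin n) (a : {i // i ≠ j} → ℤ) :
    (vProd n v hv ((quotientDiagonalEquiv j).symm a)).toMul = ∏ i : {i // i ≠ j}, v i ^ a i := by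
  show (∏ i, v i ^ (Equiv.piSplitAt j fun _ => ℤ).symm (0, a) i) = _
  rw [Fintype.prod_piSplitAt_symm j (fun i k => v i ^ k), zpow_zero, one_mul]

section CanonicalChart

variable {Λ : Type*} [Fintype Λ] [DecidableEq Λ] (r : Λ → ℕ) (idx : (l : Λ) → Fin (r l + 1))
  {T : Type*} [CommMonoid T] (pq : T) (v : (l : Λ) → Fin (r l + 1) → Tˣ)
  (hv : ∀ l, ∏ i, v l i = 1)

abbrev PCan := ℕ × ((l : Λ) → GqT (r l + 1))

noncomputable def psiCan (z : PCan r) : T :=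
  pq ^ z.1 * ∏ l, ((vProd (r l + 1) (v l) (hv l) (z.2 l)).toMul : T)

def pMonEquivPCan (l0 : Λ) : PMon r idx l0 ≃+ PCan r :=
  (AddEquiv.refl ℕ).prodCongr
    (((quotientDiagonalEquiv (idx l0)).symm.prodCongr (AddEquiv.refl _)).trans
      (AddEquiv.piSplitAt l0 fun l => GqT (r l + 1)).symm)

theorem psiCan_pMonEquivPCan (l0 : Λ) (z : PMon r idx l0) :
    psiCan r pq v hv (pMonEquivPCan r idx l0 z) = psiFun r idx pq v hv l0 z := by
  obtain ⟨n, a, w⟩ := z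
  calc psiCan r pq v hv (pMonEquivPCan r idx l0 (n, a, w))
      = pq ^ n * (((vProd (r l0 + 1) (v l0) (hv l0)
          ((quotientDiagonalEquiv (idx l0)).symm a)).toMul : T) *
          ∏ l : {l // l ≠ l0}, ((vProd (r l + 1) (v l) (hv l) (w l)).toMul : T)) :=
        congrArg (pq ^ n * ·) (Fintype.prod_piSplitAt_symm (β := fun l => GqT (r l + 1)) l0
          (fun l x => ((vProd (r l + 1) (v l) (hv l) x).toMul : T)) _ _)
    _ = psiFun r idx pq v hv l0 (n, a, w) := by
      rw [vProd_quotientDiagonalEquiv_symm, Units.coe_prod, psiFun, mul_assoc]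

end CanonicalChart

theorem chart_monoids_canonically_isomorphic
    {Λ : Type*} [Fintype Λ] [DecidableEq Λ] (r : Λ → ℕ)
    (idx : (l : Λ) → Fin (r l + 1))
    {T : Type*} [CommMonoid T] (pq : T)
    (v : (l : Λ) → Fin (r l + 1) → Tˣ) (hv : ∀ l, ∏ i, v l i = 1)
    (l0 l1 : Λ) :
    ∃ e : PMon r idx l0 ≃+ PMon r idx l1,
      ∀ z : PMon r idx l0,
        psiFun r idx pq v hv l1 (e z) = psiFun r idx pq v hv l0 z := by
  refine ⟨(pMonEquivPCan r idx l0).trans (pMonEquivPCan r idx l1).symm, fun z => ?_⟩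
  rw [← psiCan_pMonEquivPCan r idx pq v hv l1, AddEquiv.trans_apply, AddEquiv.apply_symm_apply,
    psiCan_pMonEquivPCan]
end
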